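/- Full faithfulness from the simple case (Appendix A Lemma): Let 𝒞 be a Serre subcategory of an abelian category 𝒜 with enough projectives, all of whose objects have finite length, and let F : 𝒞 → ℬ be an exact additive functor into an abelian category ℬ with enough projectives. Assume: (i) for all simple objects X, Y of 𝒞 the map Hom_𝒜(X, Y) → Hom_ℬ(F X, F Y) is bijective and the map Ext¹_𝒜(X, Y) → Ext¹_ℬ(F X, F Y) is injective; (ii) F sends simple objects to simple objects; (iii) for simple X, Y of 𝒞, F X ≅ F Y implies X ≅ Y. Then for all objects X, Y of 𝒞, the map Hom_𝒜(X, Y) → Hom_ℬ(F X, F Y) is bijective (F is fully faithful) and the map Ext¹_𝒜(X, Y) → Ext¹_ℬ(F X, F Y) is injective. -/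

import Mathlib

/-
Faithfulness: an exact functor that sends no simple object to zero sends no nonzero object of
finite length to zero, hence kills no nonzero morphism (look at its image).

Fullness is proved by dévissage along composition series. For a simple target `T`, induct on the
source `X ⊇ X'` with `X / X'` simple: the restriction of `g : F X ⟶ F T` to `F X'` is `F u`, the
obstruction to extending `u` over `X` is the pushout extension of `X / X'` by `T`, which `g`
splits after `F`, and the remaining difference factors through `F (X / X')`. For an arbitrary
target, induct on `Y ⊇ Y'` with `Y / Y'` simple: now the obstruction is a pullback extension of
`X` by `Y'`. Injectivity on `Ext¹(-, Y')` follows from fullness on every `Hom(E, Y')` together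
with faithfulness: a retraction of `F i` for `i : Y' ⟶ E` is `F r` for some `r`, and
`i ≫ r = 𝟙` since this holds after `F`. The same argument gives the Ext¹ statement of the
theorem.
-/

open CategoryTheory Limits

/-- `LengthLE n X`: the object `X` has length at most `n` (a composition series with at
most `n` simple subquotients). -/
def LengthLE {A : Type*} [Category A] [Abelian A] : ℕ → A → Prop
  | 0 => fun X => IsZero X
  | (n + 1) => fun X => IsZero X ∨
      ∃ (Y : A) (i : Y ⟶ X), Mono i ∧ Simple (cokernel i) ∧ LengthLE n Y

/-- An object has finite length if it has a finite composition series. -/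
def FiniteLength {A : Type*} [Category A] [Abelian A] (X : A) : Prop :=
  ∃ n : ℕ, LengthLE n X

theorem LengthLE.induction {C : Type*} [Category C] [Abelian C] {P : C → Prop}
    (zero : ∀ X, IsZero X → P X)
    (step : ∀ {X' X : C} (i : X' ⟶ X) [Mono i], Simple (cokernel i) → P X' → P X) :
    ∀ {n : ℕ} {X : C}, LengthLE n X → P X
  | 0, X, h => zero X h
  | _ + 1, X, Or.inl h => zero X h
  | _ + 1, _, Or.inr ⟨_, i, _, hi, h⟩ => step i hi (LengthLE.induction zero step h)

namespace CategoryTheory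

variable {C : Type*} [Category C] [Abelian C]

namespace ShortComplex

lemma shortExact_cokernel {X Y : C} (f : X ⟶ Y) [Mono f] :
    (ShortComplex.mk f (cokernel.π f) (cokernel.condition f)).ShortExact :=
  { exact := exact_cokernel f }

lemma shortExact_kernel {X Y : C} (f : X ⟶ Y) [Epi f] :
    (ShortComplex.mk (kernel.ι f) f (kernel.condition f)).ShortExact :=
  { exact := exact_kernel f }

namespace ShortExact

variable {S : ShortComplex C}

lemma exists_lift (hS : S.ShortExact) {T : C} (k : T ⟶ S.X₂) (hk : k ≫ S.g = 0) :
    ∃ l, l ≫ S.f = k :=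
  have := hS.mono_f
  ⟨_, hS.exact.lift_f k hk⟩

lemma exists_desc (hS : S.ShortExact) {T : C} (k : S.X₂ ⟶ T) (hk : S.f ≫ k = 0) :
    ∃ l, S.g ≫ l = k :=
  have := hS.epi_g
  ⟨_, hS.exact.g_desc k hk⟩

lemma exists_section_of_retraction (hS : S.ShortExact) {r : S.X₂ ⟶ S.X₁}
    (hr : S.f ≫ r = 𝟙 _) : ∃ s, s ≫ S.g = 𝟙 _ :=
  ⟨_, (Splitting.ofExactOfRetraction S hS.exact r hr hS.epi_g).s_g⟩

lemma exists_retraction_of_section (hS : S.ShortExact) {s : S.X₃ ⟶ S.X₂}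
    (hs : s ≫ S.g = 𝟙 _) : ∃ r, S.f ≫ r = 𝟙 _ :=
  ⟨_, (Splitting.ofExactOfSection S hS.exact s hs hS.mono_f).f_r⟩

lemma pullback_shortExact (hS : S.ShortExact) {T : C} (v : T ⟶ S.X₃) :
    (ShortComplex.mk (pullback.lift S.f 0 (by simp)) (pullback.snd S.g v)
      (pullback.lift_snd _ _ _)).ShortExact := by
  have := hS.mono_f
  have := hS.epi_g
  refine .mk' ?_ (mono_of_mono_fac (pullback.lift_fst _ _ _)) inferInstance
  rw [exact_iff_exact_up_to_refinements]
  intro T' x (hx : x ≫ pullback.snd _ _ = 0)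
  obtain ⟨y, hy⟩ := hS.exists_lift (x ≫ pullback.fst _ _)
    (by rw [Category.assoc, pullback.condition, reassoc_of% hx, zero_comp])
  refine ⟨T', 𝟙 _, inferInstance, y, pullback.hom_ext ?_ ?_⟩
  · rw [Category.id_comp, Category.assoc, pullback.lift_fst, hy]
  · rw [Category.id_comp, Category.assoc, pullback.lift_snd, comp_zero, hx]

lemma pushout_shortExact (hS : S.ShortExact) {T : C} (u : S.X₁ ⟶ T) :
    (ShortComplex.mk (pushout.inr S.f u) (pushout.desc S.g 0 (by simp))
      (pushout.inr_desc _ _ _)).ShortExact := by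
  have := hS.mono_f
  have := hS.epi_g
  refine .mk' ?_ inferInstance (epi_of_epi_fac (pushout.inl_desc _ _ _))
  rw [exact_iff_exact_up_to_refinements]
  intro T' x (hx : x ≫ pushout.desc _ _ _ = 0)
  obtain ⟨T'', π, hπ, a, b, hab⟩ :=
    (IsPushout.of_hasPushout S.f u).hom_eq_add_up_to_refinements x
  have ha : a ≫ S.g = 0 := by
    have := π ≫= hx
    rw [← Category.assoc, hab, Preadditive.add_comp, Category.assoc, Category.assoc,
      pushout.inl_desc, pushout.inr_desc] at this
    simpa using this
  obtain ⟨a', ha'⟩ := hS.exists_lift a ha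
  refine ⟨T'', π, hπ, a' ≫ u + b, ?_⟩
  rw [hab, ← ha', Category.assoc, pushout.condition, Preadditive.add_comp, Category.assoc]

end ShortExact

end ShortComplex

lemma IsPullback.shortExact_biprod {X₁ X₂ X₃ X₄ : C} {fst : X₁ ⟶ X₂} {snd : X₁ ⟶ X₃}
    {f : X₂ ⟶ X₄} {g : X₃ ⟶ X₄} (h : IsPullback fst snd f g) [Epi f] :
    (ShortComplex.mk (biprod.lift fst snd) (biprod.desc f (-g)) (by simp [h.w])).ShortExact := by
  have : Epi (biprod.desc f (-g)) := epi_of_epi_fac (biprod.inl_desc f (-g))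
  exact .mk' h.exact_shortComplex' h.mono_shortComplex'_f this

lemma IsPushout.shortExact_biprod {X₁ X₂ X₃ X₄ : C} {f : X₁ ⟶ X₂} {g : X₁ ⟶ X₃}
    {inl : X₂ ⟶ X₄} {inr : X₃ ⟶ X₄} (h : IsPushout f g inl inr) [Mono f] :
    (ShortComplex.mk (biprod.lift f (-g)) (biprod.desc inl inr) (by simp [h.w])).ShortExact := by
  have : Mono (biprod.lift f (-g)) := mono_of_mono_fac (biprod.lift_fst f (-g))
  exact .mk' h.exact_shortComplex this h.epi_shortComplex_g

namespace Functor

variable {A : Type*} [Category A] {B : Type*} [Category B] {Z : ObjectProperty A}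
  (F : Z.FullSubcategory ⥤ B)

def mapHomMk {X Y : A} (hX : Z X) (hY : Z Y) (f : X ⟶ Y) : F.obj ⟨X, hX⟩ ⟶ F.obj ⟨Y, hY⟩ :=
  F.map (ObjectProperty.homMk f)

section mapHomMk

variable {X Y W : A} (hX : Z X) (hY : Z Y) (hW : Z W)

@[simp]
lemma mapHomMk_id : F.mapHomMk hX hX (𝟙 X) = 𝟙 _ :=
  F.map_id _

@[simp]
lemma mapHomMk_comp (f : X ⟶ Y) (g : Y ⟶ W) :
    F.mapHomMk hX hY f ≫ F.mapHomMk hY hW g = F.mapHomMk hX hW (f ≫ g) :=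
  (F.map_comp _ _).symm

@[simp]
lemma mapHomMk_comp_assoc (f : X ⟶ Y) (g : Y ⟶ W) {T : B} (h : F.obj ⟨W, hW⟩ ⟶ T) :
    F.mapHomMk hX hY f ≫ F.mapHomMk hY hW g ≫ h = F.mapHomMk hX hW (f ≫ g) ≫ h := by
  rw [← Category.assoc, mapHomMk_comp]

variable [Preadditive A] [Preadditive B] [F.Additive]

@[simp]
lemma mapHomMk_zero : F.mapHomMk hX hY 0 = 0 :=
  F.map_zero _ _

@[simp]
lemma mapHomMk_add (f g : X ⟶ Y) :
    F.mapHomMk hX hY (f + g) = F.mapHomMk hX hY f + F.mapHomMk hX hY g :=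
  F.map_add

@[simp]
lemma mapHomMk_sub (f g : X ⟶ Y) :
    F.mapHomMk hX hY (f - g) = F.mapHomMk hX hY f - F.mapHomMk hX hY g :=
  F.map_sub

@[simp]
lemma mapHomMk_neg (f : X ⟶ Y) : F.mapHomMk hX hY (-f) = -F.mapHomMk hX hY f :=
  F.map_neg

end mapHomMk

variable [Abelian A]

/-- Injectivity of `Ext¹(X, Y) → Ext¹(F X, F Y)`: an extension of `X` by `Y` whose image under
`F` splits is split. -/
def ReflectsSplitting (X : A) {Y : A} (hY : Z Y) : Prop :=
  ∀ (E : A) (hE : Z E) (i : Y ⟶ E) (p : E ⟶ X) (w : i ≫ p = 0),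
    (ShortComplex.mk i p w).ShortExact →
    (∃ r, F.mapHomMk hY hE i ≫ r = 𝟙 _) → ∃ r : E ⟶ Y, i ≫ r = 𝟙 Y

lemma reflectsSplitting_of_surjective {Y : A} {hY : Z Y}
    (hfull : ∀ {E : A} (hE : Z E), Function.Surjective (F.mapHomMk hE hY))
    (hfaith : Function.Injective (F.mapHomMk hY hY)) (X : A) : F.ReflectsSplitting X hY := by
  rintro E hE i - - - ⟨ρ, hρ⟩
  obtain ⟨r, rfl⟩ := hfull hE ρ
  exact ⟨r, hfaith (by simpa using hρ)⟩

lemma surjective_mapHomMk_of_isZero {X Y : A} {hX : Z X} {hY : Z Y}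
    (h : IsZero (F.obj ⟨X, hX⟩) ∨ IsZero (F.obj ⟨Y, hY⟩)) :
    Function.Surjective (F.mapHomMk hX hY) := by
  intro g
  refine ⟨0, ?_⟩
  rcases h with h | h
  exacts [h.eq_of_src _ _, h.eq_of_tgt _ _]

variable [Abelian B] [F.Additive]

def PreservesShortExact : Prop :=
  ∀ (S : ShortComplex A), S.ShortExact → ∀ (h₁ : Z S.X₁) (h₂ : Z S.X₂) (h₃ : Z S.X₃),
    (ShortComplex.mk (F.mapHomMk h₁ h₂ S.f) (F.mapHomMk h₂ h₃ S.g) (by simp)).ShortExact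

lemma isZero_obj_of_isZero {X : A} (hX : Z X) (h : IsZero X) : IsZero (F.obj ⟨X, hX⟩) :=
  F.map_isZero ((IsZero.iff_id_eq_zero _).2 (ObjectProperty.hom_ext _ (h.eq_of_src _ _)))

lemma mono_mapHomMk (hF : F.PreservesShortExact) [Z.IsClosedUnderQuotients] {X Y : A} (hX : Z X)
    (hY : Z Y) (f : X ⟶ Y) [Mono f] : Mono (F.mapHomMk hX hY f) :=
  (hF _ (ShortComplex.shortExact_cokernel f) hX hY (Z.prop_of_epi (cokernel.π f) hY)).mono_f

lemma epi_mapHomMk (hF : F.PreservesShortExact) [Z.IsClosedUnderSubobjects] {X Y : A} (hX : Z X)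
    (hY : Z Y) (f : X ⟶ Y) [Epi f] : Epi (F.mapHomMk hX hY f) :=
  (hF _ (ShortComplex.shortExact_kernel f) (Z.prop_of_mono (kernel.ι f) hX) hX hY).epi_g

lemma isZero_of_isZero_obj (hF : F.PreservesShortExact) [Z.IsClosedUnderSubobjects]
    [Z.IsClosedUnderQuotients] (hsimple : ∀ {S : A} (hS : Z S), Simple S → ¬IsZero (F.obj ⟨S, hS⟩))
    {n : ℕ} {X : A} (hlen : LengthLE n X) (hX : Z X) (h : IsZero (F.obj ⟨X, hX⟩)) : IsZero X := by
  rcases n with _ | n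
  · exact hlen
  rcases hlen with hlen | ⟨X', i, hi, hS, -⟩
  · exact hlen
  have hSZ : Z (cokernel i) := Z.prop_of_epi (cokernel.π i) hX
  have := F.epi_mapHomMk hF hX hSZ (cokernel.π i)
  exact (hsimple hSZ hS (h.of_epi (F.mapHomMk hX hSZ (cokernel.π i)))).elim

lemma injective_mapHomMk (hF : F.PreservesShortExact) [Z.IsClosedUnderSubobjects]
    [Z.IsClosedUnderQuotients] (hzero : ∀ {W : A} (hW : Z W), IsZero (F.obj ⟨W, hW⟩) → IsZero W)
    {X Y : A} (hX : Z X) (hY : Z Y) : Function.Injective (F.mapHomMk hX hY) := by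
  intro f g hfg
  rw [← sub_eq_zero, ← image.fac (f - g)]
  have hI : Z (image (f - g)) := Z.prop_of_mono (image.ι _) hY
  have := F.epi_mapHomMk hF hX hI (factorThruImage (f - g))
  have := F.mono_mapHomMk hF hI hY (image.ι (f - g))
  have hFι : F.mapHomMk hI hY (image.ι (f - g)) = 0 := by
    rw [← cancel_epi (F.mapHomMk hX hI (factorThruImage (f - g))), mapHomMk_comp, image.fac,
      mapHomMk_sub, hfg, sub_self, comp_zero]
  rw [(hzero hI (IsZero.of_mono_eq_zero _ hFι)).eq_of_src (image.ι _) 0, comp_zero]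

lemma surjective_mapHomMk_of_shortExact_target (hF : F.PreservesShortExact)
    [Z.IsClosedUnderExtensions] {S : ShortComplex A}
    (hS : S.ShortExact) {X : A} (hX : Z X) (h₁ : Z S.X₁) (h₂ : Z S.X₂) (h₃ : Z S.X₃)
    (hfull₁ : Function.Surjective (F.mapHomMk hX h₁))
    (hfull₃ : Function.Surjective (F.mapHomMk hX h₃)) (hext₁ : F.ReflectsSplitting X h₁) :
    Function.Surjective (F.mapHomMk hX h₂) := by
  intro g
  obtain ⟨v, hv⟩ := hfull₃ (g ≫ F.mapHomMk h₂ h₃ S.g)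
  -- `g` splits the image under `F` of the pullback of `S` along `v`; a splitting in `A` lifts `v`.
  have := hS.epi_g
  have sq := IsPullback.of_hasPullback S.g v
  have hP := hS.pullback_shortExact v
  have hsum : Z (S.X₂ ⊞ X) := Z.prop_X₂_of_shortExact
    (ShortComplex.Splitting.ofHasBinaryBiproduct S.X₂ X).shortExact h₂ hX
  have hPZ : Z (pullback S.g v) := Z.prop_X₂_of_shortExact hP h₁ hX
  obtain ⟨σ, hσ⟩ := (hF _ sq.shortExact_biprod hPZ hsum h₃).exists_lift
    (g ≫ F.mapHomMk h₂ hsum biprod.inl + F.mapHomMk hX hsum biprod.inr)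
    (by simp [Preadditive.add_comp, hv])
  have hσ' : σ ≫ F.mapHomMk hPZ hX (pullback.snd S.g v) = 𝟙 _ := by
    simpa [Preadditive.add_comp] using hσ =≫ F.mapHomMk hsum hX biprod.snd
  obtain ⟨ρ, hρ⟩ := (hF _ hP h₁ hPZ hX).exists_retraction_of_section hσ'
  obtain ⟨r, hr⟩ := hext₁ _ hPZ _ _ _ hP ⟨ρ, hρ⟩
  obtain ⟨s, hs⟩ := hP.exists_section_of_retraction hr
  obtain ⟨k, hk⟩ := (hF S hS h₁ h₂ h₃).exists_lift
    (g - F.mapHomMk hX h₂ (s ≫ pullback.fst _ _))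
    (by simp [pullback.condition, reassoc_of% hs, hv])
  obtain ⟨k, rfl⟩ := hfull₁ k
  exact ⟨s ≫ pullback.fst _ _ + k ≫ S.f, by simpa [eq_sub_iff_add_eq'] using hk⟩

lemma surjective_mapHomMk_of_shortExact_source (hF : F.PreservesShortExact)
    [Z.IsClosedUnderExtensions] {S : ShortComplex A}
    (hS : S.ShortExact) {Y : A} (hY : Z Y) (h₁ : Z S.X₁) (h₂ : Z S.X₂) (h₃ : Z S.X₃)
    (hfull₁ : Function.Surjective (F.mapHomMk h₁ hY))
    (hfull₃ : Function.Surjective (F.mapHomMk h₃ hY)) (hext₃ : F.ReflectsSplitting S.X₃ hY) :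
    Function.Surjective (F.mapHomMk h₂ hY) := by
  intro g
  obtain ⟨u, hu⟩ := hfull₁ (F.mapHomMk h₁ h₂ S.f ≫ g)
  -- `g` splits the image under `F` of the pushout of `S` along `u`; a splitting in `A` extends `u`.
  have := hS.mono_f
  have sq := IsPushout.of_hasPushout S.f u
  have hW := hS.pushout_shortExact u
  have hsum : Z (S.X₂ ⊞ Y) := Z.prop_X₂_of_shortExact
    (ShortComplex.Splitting.ofHasBinaryBiproduct S.X₂ Y).shortExact h₂ hY
  have hWZ : Z (pushout S.f u) := Z.prop_X₂_of_shortExact hW hY h₃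
  obtain ⟨ρ, hρ⟩ := (hF _ sq.shortExact_biprod h₁ hsum hWZ).exists_desc
    (F.mapHomMk hsum h₂ biprod.fst ≫ g + F.mapHomMk hsum hY biprod.snd)
    (by simp [Preadditive.comp_add, hu])
  obtain ⟨r, hr⟩ := hext₃ _ hWZ _ _ _ hW ⟨ρ, by
    simpa [Preadditive.comp_add] using F.mapHomMk hY hsum biprod.inr ≫= hρ⟩
  have hru : S.f ≫ pushout.inl _ _ ≫ r = u := by
    rw [pushout.condition_assoc, hr, Category.comp_id]
  obtain ⟨k, hk⟩ := (hF S hS h₁ h₂ h₃).exists_desc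
    (g - F.mapHomMk h₂ hY (pushout.inl _ _ ≫ r)) (by simp [hru, hu])
  obtain ⟨k, rfl⟩ := hfull₃ k
  exact ⟨pushout.inl _ _ ≫ r + S.g ≫ k, by simpa [eq_sub_iff_add_eq'] using hk⟩

lemma surjective_mapHomMk_of_simple_target (hF : F.PreservesShortExact)
    [Z.IsClosedUnderSubobjects] [Z.IsClosedUnderQuotients] [Z.IsClosedUnderExtensions]
    (hfullSimple : ∀ {S T : A} (hS : Z S) (hT : Z T), Simple S → Simple T →
      Function.Surjective (F.mapHomMk hS hT))
    (hextSimple : ∀ {S T : A}, Z S → ∀ hT : Z T, Simple S → Simple T →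
      F.ReflectsSplitting S hT)
    {T : A} (hT : Z T) [Simple T] {n : ℕ} {X : A} (hlen : LengthLE n X) (hX : Z X) :
    Function.Surjective (F.mapHomMk hX hT) := by
  refine LengthLE.induction (P := fun X ↦ ∀ hX : Z X, Function.Surjective (F.mapHomMk hX hT))
    (fun X h hX ↦ F.surjective_mapHomMk_of_isZero (.inl (F.isZero_obj_of_isZero hX h)))
    (fun i _ hS ih hX ↦ ?_) hlen hX
  have h₁ := Z.prop_of_mono i hX
  have h₃ := Z.prop_of_epi (cokernel.π i) hX
  exact F.surjective_mapHomMk_of_shortExact_source hF (ShortComplex.shortExact_cokernel i) hT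
    h₁ hX h₃ (ih h₁) (hfullSimple h₃ hT hS ‹_›) (hextSimple h₃ hT hS ‹_›)

lemma surjective_mapHomMk_of_finiteLength (hF : F.PreservesShortExact)
    [Z.IsClosedUnderSubobjects] [Z.IsClosedUnderQuotients] [Z.IsClosedUnderExtensions]
    (hfaith : ∀ {X Y : A} (hX : Z X) (hY : Z Y), Function.Injective (F.mapHomMk hX hY))
    (hfullSimple : ∀ {S T : A} (hS : Z S) (hT : Z T), Simple S → Simple T →
      Function.Surjective (F.mapHomMk hS hT))
    (hextSimple : ∀ {S T : A}, Z S → ∀ hT : Z T, Simple S → Simple T →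
      F.ReflectsSplitting S hT)
    (hlen : ∀ X : A, Z X → FiniteLength X) {X Y : A} (hX : Z X) (hY : Z Y) :
    Function.Surjective (F.mapHomMk hX hY) := by
  obtain ⟨n, hn⟩ := hlen Y hY
  refine LengthLE.induction
    (P := fun Y ↦ ∀ (hY : Z Y) {X : A} (hX : Z X), Function.Surjective (F.mapHomMk hX hY))
    (fun Y h hY X hX ↦ F.surjective_mapHomMk_of_isZero (.inr (F.isZero_obj_of_isZero hY h)))
    (fun i _ hS ih hY X hX ↦ ?_) hn hY hX
  have h₁ := Z.prop_of_mono i hY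
  have h₃ := Z.prop_of_epi (cokernel.π i) hY
  exact F.surjective_mapHomMk_of_shortExact_target hF (ShortComplex.shortExact_cokernel i) hX
    h₁ hY h₃ (ih h₁ hX)
    (F.surjective_mapHomMk_of_simple_target hF hfullSimple hextSimple h₃ (hlen X hX).choose_spec
      hX)
    (F.reflectsSplitting_of_surjective (ih h₁) (hfaith h₁ h₁) X)

end Functor

end CategoryTheory

theorem fully_faithful_from_simple_case_general
    {A : Type*} [Category A] [Abelian A]
    {B : Type*} [Category B] [Abelian B]
    (Z : A → Prop)
    (hSub : ∀ (X Y : A) (i : X ⟶ Y), Mono i → Z Y → Z X)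
    (hQuot : ∀ (X Y : A) (p : X ⟶ Y), Epi p → Z X → Z Y)
    (hExtClosed : ∀ S : ShortComplex A, S.ShortExact → Z S.X₁ → Z S.X₃ → Z S.X₂)
    (hLen : ∀ X : A, Z X → FiniteLength X)
    (F : ObjectProperty.FullSubcategory Z ⥤ B) [F.Additive]
    (hFexact : ∀ (S : ShortComplex A), S.ShortExact →
      ∀ (h1 : Z S.X₁) (h2 : Z S.X₂) (h3 : Z S.X₃),
      ∃ w : F.map (X := ⟨S.X₁, h1⟩) (Y := ⟨S.X₂, h2⟩) (ObjectProperty.homMk S.f) ≫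
          F.map (X := ⟨S.X₂, h2⟩) (Y := ⟨S.X₃, h3⟩) (ObjectProperty.homMk S.g) = 0,
        (ShortComplex.mk (F.map (X := ⟨S.X₁, h1⟩) (Y := ⟨S.X₂, h2⟩) (ObjectProperty.homMk S.f))
          (F.map (X := ⟨S.X₂, h2⟩) (Y := ⟨S.X₃, h3⟩) (ObjectProperty.homMk S.g)) w).ShortExact)
    (hHomSimple : ∀ X Y : ObjectProperty.FullSubcategory Z, Simple X.obj → Simple Y.obj →
      Function.Bijective (fun f : X ⟶ Y => F.map f))
    (hExtSimple : ∀ (X Y : A) (hX : Z X) (hY : Z Y), Simple X → Simple Y →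
      ∀ (E : A) (hE : Z E) (i : Y ⟶ E) (p : E ⟶ X) (w : i ≫ p = 0),
        (ShortComplex.mk i p w).ShortExact →
        (∃ r : F.obj ⟨E, hE⟩ ⟶ F.obj ⟨Y, hY⟩,
          F.map (X := ⟨Y, hY⟩) (Y := ⟨E, hE⟩) (ObjectProperty.homMk i) ≫ r = 𝟙 (F.obj ⟨Y, hY⟩)) →
        (∃ r : E ⟶ Y, i ≫ r = 𝟙 Y))
    (hSimple : ∀ X : ObjectProperty.FullSubcategory Z, Simple X.obj → Simple (F.obj X)) :
    (∀ X Y : ObjectProperty.FullSubcategory Z, Function.Bijective (fun f : X ⟶ Y => F.map f)) ∧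
    (∀ (X Y : A) (hX : Z X) (hY : Z Y) (E : A) (hE : Z E)
        (i : Y ⟶ E) (p : E ⟶ X) (w : i ≫ p = 0),
      (ShortComplex.mk i p w).ShortExact →
      (∃ r : F.obj ⟨E, hE⟩ ⟶ F.obj ⟨Y, hY⟩,
        F.map (X := ⟨Y, hY⟩) (Y := ⟨E, hE⟩) (ObjectProperty.homMk i) ≫ r = 𝟙 (F.obj ⟨Y, hY⟩)) →
      (∃ r : E ⟶ Y, i ≫ r = 𝟙 Y)) := by
  have : ObjectProperty.IsClosedUnderSubobjects Z := ⟨fun f _ hY ↦ hSub _ _ f ‹_› hY⟩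
  have : ObjectProperty.IsClosedUnderQuotients Z := ⟨fun f _ hX ↦ hQuot _ _ f ‹_› hX⟩
  have : ObjectProperty.IsClosedUnderExtensions Z := ⟨fun hS ↦ hExtClosed _ hS⟩
  have hF : F.PreservesShortExact := fun S hS h₁ h₂ h₃ ↦ (hFexact S hS h₁ h₂ h₃).choose_spec
  have hzero {W : A} (hW : Z W) : IsZero (F.obj ⟨W, hW⟩) → IsZero W :=
    F.isZero_of_isZero_obj hF (fun hS hSs ↦ have := hSimple ⟨_, hS⟩ hSs; Simple.not_isZero _)
      (hLen _ hW).choose_spec hW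
  have hfaith {X Y : A} (hX : Z X) (hY : Z Y) := F.injective_mapHomMk hF hzero hX hY
  have hfull {X Y : A} (hX : Z X) (hY : Z Y) := F.surjective_mapHomMk_of_finiteLength hF hfaith
    (fun hS hT hSs hTs ↦
      (hHomSimple ⟨_, hS⟩ ⟨_, hT⟩ hSs hTs).2.comp ObjectProperty.homMk_surjective)
    (fun hS hT hSs hTs ↦ hExtSimple _ _ hS hT hSs hTs) hLen hX hY
  refine ⟨fun X Y ↦ ⟨fun f g h ↦ ObjectProperty.hom_ext _ (hfaith X.2 Y.2 h), fun g ↦ ?_⟩,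
    fun X Y _ hY ↦ F.reflectsSplitting_of_surjective (hfull · hY) (hfaith hY hY) X⟩
  obtain ⟨f, hf⟩ := hfull X.2 Y.2 g
  exact ⟨ObjectProperty.homMk f, hf⟩

/-- Appendix A Lemma: full faithfulness from the simple case. Let `𝒞` be
the full subcategory of an abelian category `𝒜` (with enough projectives) on a class `Z`
of objects which is Serre (closed under subobjects, quotients and extensions) and all of
whose objects have finite length, and let `F : 𝒞 ⥤ ℬ` be an exact additive functor into
an abelian category `ℬ` with enough projectives. Assume (i) for simple objects `X, Y` of
`𝒞` the map `Hom(X, Y) → Hom(F X, F Y)` is bijective and the map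
`Ext¹(X, Y) → Ext¹(F X, F Y)` is injective (injectivity of this group homomorphism being
encoded by triviality of its kernel: if the `F`-image of a short exact sequence
`0 → Y → E → X → 0` splits, then so does the sequence itself); (ii) `F` sends simple
objects to simple objects; (iii) `F X ≅ F Y` implies `X ≅ Y` for simples `X, Y` of `𝒞`.
Then for all objects `X, Y` of `𝒞`, the map `Hom(X, Y) → Hom(F X, F Y)` is bijective
(`F` is fully faithful) and the map `Ext¹(X, Y) → Ext¹(F X, F Y)` is injective. -/
theorem fully_faithful_from_simple_case
    {A : Type*} [Category A] [Abelian A] [EnoughProjectives A]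
    {B : Type*} [Category B] [Abelian B] [EnoughProjectives B]
    (Z : A → Prop)
    (hSub : ∀ (X Y : A) (i : X ⟶ Y), Mono i → Z Y → Z X)
    (hQuot : ∀ (X Y : A) (p : X ⟶ Y), Epi p → Z X → Z Y)
    (hExtClosed : ∀ S : ShortComplex A, S.ShortExact → Z S.X₁ → Z S.X₃ → Z S.X₂)
    (hLen : ∀ X : A, Z X → FiniteLength X)
    (F : ObjectProperty.FullSubcategory Z ⥤ B) [F.Additive]
    (hFexact : ∀ (S : ShortComplex A), S.ShortExact →
      ∀ (h1 : Z S.X₁) (h2 : Z S.X₂) (h3 : Z S.X₃),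
      ∃ w : F.map (X := ⟨S.X₁, h1⟩) (Y := ⟨S.X₂, h2⟩) (ObjectProperty.homMk S.f) ≫
          F.map (X := ⟨S.X₂, h2⟩) (Y := ⟨S.X₃, h3⟩) (ObjectProperty.homMk S.g) = 0,
        (ShortComplex.mk (F.map (X := ⟨S.X₁, h1⟩) (Y := ⟨S.X₂, h2⟩) (ObjectProperty.homMk S.f))
          (F.map (X := ⟨S.X₂, h2⟩) (Y := ⟨S.X₃, h3⟩) (ObjectProperty.homMk S.g)) w).ShortExact)
    (hHomSimple : ∀ X Y : ObjectProperty.FullSubcategory Z, Simple X.obj → Simple Y.obj →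
      Function.Bijective (fun f : X ⟶ Y => F.map f))
    (hExtSimple : ∀ (X Y : A) (hX : Z X) (hY : Z Y), Simple X → Simple Y →
      ∀ (E : A) (hE : Z E) (i : Y ⟶ E) (p : E ⟶ X) (w : i ≫ p = 0),
        (ShortComplex.mk i p w).ShortExact →
        (∃ r : F.obj ⟨E, hE⟩ ⟶ F.obj ⟨Y, hY⟩,
          F.map (X := ⟨Y, hY⟩) (Y := ⟨E, hE⟩) (ObjectProperty.homMk i) ≫ r = 𝟙 (F.obj ⟨Y, hY⟩)) →
        (∃ r : E ⟶ Y, i ≫ r = 𝟙 Y))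
    (hSimple : ∀ X : ObjectProperty.FullSubcategory Z, Simple X.obj → Simple (F.obj X))
    (hIsoSimple : ∀ X Y : ObjectProperty.FullSubcategory Z, Simple X.obj → Simple Y.obj →
      Nonempty (F.obj X ≅ F.obj Y) → Nonempty (X.obj ≅ Y.obj)) :
    (∀ X Y : ObjectProperty.FullSubcategory Z, Function.Bijective (fun f : X ⟶ Y => F.map f)) ∧
    (∀ (X Y : A) (hX : Z X) (hY : Z Y) (E : A) (hE : Z E)
        (i : Y ⟶ E) (p : E ⟶ X) (w : i ≫ p = 0),
      (ShortComplex.mk i p w).ShortExact →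
      (∃ r : F.obj ⟨E, hE⟩ ⟶ F.obj ⟨Y, hY⟩,
        F.map (X := ⟨Y, hY⟩) (Y := ⟨E, hE⟩) (ObjectProperty.homMk i) ≫ r = 𝟙 (F.obj ⟨Y, hY⟩)) →
      (∃ r : E ⟶ Y, i ≫ r = 𝟙 Y)) :=
  fully_faithful_from_simple_case_general Z hSub hQuot hExtClosed hLen F hFexact hHomSimple
    hExtSimple hSimple
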